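/- arXiv:2008.03386 — 4 statements merged into one kernel-verified Lean document; each statement's English description precedes it below -/
import Mathlib

section
/- (Goblot) If ε is an ordinal whose cofinality equals ℵ_k for some natural number k, then the cohomological dimension of ε is at most k+1: for every inverse system X of abelian groups over ε and every integer n > k+1, lim^n X = 0. -/
/-!
Induction on `k`, proving more generally that `lim^n X = 0` for `n > k` whenever `cof ε < ℵ_k`.
If `ε` is zero or a successor, appending the greatest index to tuples is a contracting homotopy,
so `lim^n X = 0` for all `n ≥ 1`. If `ε` is a limit, choose a continuous increasing sequence
`(F ξ)_{ξ < cof ε}` cofinal in `ε` with `cof (F ξ) < cof ε`; by induction, the restriction of `X`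
to each `F ξ` has `lim^j = 0` for all `j ≥ n - 1`. Given an `n`-cocycle `c`, build by transfinite
recursion cochains `B ξ` with `d (B ξ) = c` on `[F ξ]^{n+1}` that are coherent: at a successor
stage a solution over `F (ξ + 1)` is corrected by a coboundary, using `lim^{n-1} = 0` below `F ξ`,
so that it extends `B ξ`; at limit stages, and finally at `cof ε`, the coherent family is glued.
-/
noncomputable section

/-- An inverse system of abelian groups over the ordinal `ε`: abelian groups `G α`
for `α < ε` together with bonding homomorphisms `G β →+ G α` for `α ≤ β < ε`,
with the identity and composition laws. -/
structure InvSys (ε : Ordinal) where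
  G : Set.Iio ε → Type 1
  [grp : ∀ α, AddCommGroup (G α)]
  map : ∀ {α β : Set.Iio ε}, α ≤ β → G β →+ G α
  map_id : ∀ α : Set.Iio ε, map (le_refl α) = AddMonoidHom.id (G α)
  map_comp : ∀ {α β γ : Set.Iio ε} (h₁ : α ≤ β) (h₂ : β ≤ γ) (x : G γ),
    map h₁ (map h₂ x) = map (h₁.trans h₂) x

attribute [instance] InvSys.grp

/-- The strictly increasing `m`-tuples of ordinals below `ε`. -/
def Tup (ε : Ordinal) (m : ℕ) : Type 1 :=
  {t : Fin m → ↥(Set.Iio ε) // StrictMono t}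

/-- The tuple obtained by removing the `i`-th entry. -/
def faceT {ε : Ordinal} {m : ℕ} (t : Tup ε (m + 1)) (i : Fin (m + 1)) : Tup ε m :=
  ⟨t.1 ∘ i.succAbove, t.2.comp (Fin.strictMono_succAbove i)⟩

/-- The cochain group `K^j(X) = Π_{α⃗ ∈ [ε]^{j+1}} X_{α₀}`. -/
def K {ε : Ordinal} (X : InvSys ε) (j : ℕ) : Type 1 :=
  ∀ t : Tup ε (j + 1), X.G (t.1 0)

instance {ε : Ordinal} (X : InvSys ε) (j : ℕ) : AddCommGroup (K X j) :=
  Pi.addCommGroup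

/-- The coboundary map `d^j : K^j(X) → K^{j+1}(X)`,
`d^j(c)(α⃗) = x_{α₀α₁}(c(α⃗^0)) + Σ_{i=1}^{j+1} (−1)^i c(α⃗^i)` (the bonding map applied
to each face term transports it into the group indexed by the least entry `α₀`;
for `i ≥ 1` this bonding map is the identity since `α⃗^i` has least entry `α₀`). -/
def dK {ε : Ordinal} (X : InvSys ε) (j : ℕ) (c : K X j) : K X (j + 1) :=
  fun t => ∑ i : Fin (j + 2),
    (-1 : ℤ) ^ (i : ℕ) •
      X.map (t.2.monotone (Fin.zero_le (i.succAbove 0))) (c (faceT t i))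

/-- `limVanishes X n` says that the `n`-th derived limit of `X` vanishes:
`lim^n X = ker d^n / im d^{n−1} = 0` (with `lim^0 X = ker d^0`). -/
def limVanishes {ε : Ordinal} (X : InvSys ε) : ℕ → Prop
  | 0 => ∀ c : K X 0, dK X 0 c = 0 → c = 0
  | n + 1 => ∀ c : K X (n + 1), dK X (n + 1) c = 0 → ∃ b : K X n, dK X n b = c

open Order Cardinal

namespace Fin

theorem val_succAbove {n : ℕ} (p : Fin (n + 1)) (x : Fin n) :
    (p.succAbove x : ℕ) = if (x : ℕ) < p then (x : ℕ) else (x : ℕ) + 1 := by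
  rw [Fin.succAbove]
  split_ifs <;> simp_all [Fin.lt_def]

end Fin

namespace Tup

variable {ε : Ordinal}

/-- The simplicial identity `∂_b ∂_a = ∂_a ∂_{b+1}` (`a ≤ b`), with indices given by values. -/
theorem faceT_faceT {n : ℕ} (t : Tup ε (n + 2)) {a a' : Fin (n + 2)} {b b' : Fin (n + 1)}
    (hab : (a : ℕ) ≤ b) (ha' : (a' : ℕ) = b + 1) (hb' : (b' : ℕ) = a) :
    faceT (faceT t a) b = faceT (faceT t a') b' := by
  refine Subtype.ext (funext fun x => congrArg t.1 (Fin.ext ?_))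
  simp only [Fin.val_succAbove]
  split_ifs <;> omega

end Tup

namespace K

variable {ε : Ordinal} {X : InvSys ε} {j : ℕ}

theorem map_apply_congr (a : K X j) {α : Set.Iio ε} {u v : Tup ε (j + 1)} (huv : u = v)
    (hu : α ≤ u.1 0) (hv : α ≤ v.1 0) : X.map hu (a u) = X.map hv (a v) := by
  subst huv; rfl

theorem zsmul_map_add_zsmul_map (a : K X j) {α : Set.Iio ε} {u v : Tup ε (j + 1)} (huv : u = v)
    {s s' : ℤ} (hs : s + s' = 0) (hu : α ≤ u.1 0) (hv : α ≤ v.1 0) :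
    s • X.map hu (a u) + s' • X.map hv (a v) = 0 := by
  subst huv
  rw [← add_smul, hs, zero_smul]

end K

theorem InvSys.map_self_apply {ε : Ordinal} (X : InvSys ε) {α : Set.Iio ε} (h : α ≤ α)
    (v : X.G α) : X.map h v = v := by
  rw [X.map_id]; rfl

section Coboundary

variable {ε : Ordinal} (X : InvSys ε)

theorem dK_apply (j : ℕ) (c : K X j) (t : Tup ε (j + 2)) :
    dK X j c t = ∑ i : Fin (j + 2), (-1 : ℤ) ^ (i : ℕ) •
      X.map (t.2.monotone (Fin.zero_le (i.succAbove 0))) (c (faceT t i)) := rfl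

theorem map_dK_apply (j : ℕ) (c : K X j) (t : Tup ε (j + 2)) {α : Set.Iio ε} (h : α ≤ t.1 0) :
    X.map h (dK X j c t) = ∑ i : Fin (j + 2), (-1 : ℤ) ^ (i : ℕ) •
      X.map (h.trans (t.2.monotone (Fin.zero_le (i.succAbove 0)))) (c (faceT t i)) := by
  rw [dK_apply, map_sum]
  refine Finset.sum_congr rfl fun i _ => ?_
  erw [map_zsmul, X.map_comp]

theorem dK_sub (j : ℕ) (p q : K X j) : dK X j (p - q) = dK X j p - dK X j q := by
  funext t
  show _ = dK X j p t - dK X j q t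
  simp only [dK_apply, ← Finset.sum_sub_distrib, ← smul_sub]
  refine Finset.sum_congr rfl fun i _ => ?_
  erw [← map_sub]
  rfl

theorem dK_dK_apply_eq_sum (j : ℕ) (a : K X j) (t : Tup ε (j + 3)) :
    dK X (j + 1) (dK X j a) t = ∑ p : Fin (j + 3) × Fin (j + 2), (-1 : ℤ) ^ ((p.1 : ℕ) + p.2) •
      X.map (t.2.monotone (Fin.zero_le (p.1.succAbove (p.2.succAbove 0))))
        (a (faceT (faceT t p.1) p.2)) := by
  rw [Fintype.sum_prod_type, dK_apply]
  refine Finset.sum_congr rfl fun i _ => ?_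
  erw [map_dK_apply X j a (faceT t i), Finset.smul_sum]
  simp only [smul_smul, ← pow_add]
  rfl

/-- Pairs each double face `∂_b ∂_a` with the one it cancels against in `d ∘ d`. -/
def faceSwap (n : ℕ) (p : Fin (n + 3) × Fin (n + 2)) : Fin (n + 3) × Fin (n + 2) :=
  if h : (p.2 : ℕ) < p.1 then (⟨p.2, by omega⟩, ⟨p.1 - 1, by omega⟩)
  else (⟨p.2 + 1, by omega⟩, ⟨p.1, by omega⟩)

theorem faceSwap_of_lt {n : ℕ} {i : Fin (n + 3)} {i' : Fin (n + 2)} (h : (i' : ℕ) < i) :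
    faceSwap n (i, i') = (⟨i', by omega⟩, ⟨i - 1, by omega⟩) :=
  dif_pos h

theorem faceSwap_of_le {n : ℕ} {i : Fin (n + 3)} {i' : Fin (n + 2)} (h : (i : ℕ) ≤ i') :
    faceSwap n (i, i') = (⟨i' + 1, by omega⟩, ⟨i, by omega⟩) :=
  dif_neg (not_lt.2 h)

theorem faceSwap_ne {n : ℕ} (p : Fin (n + 3) × Fin (n + 2)) : faceSwap n p ≠ p := by
  unfold faceSwap
  split_ifs <;> simp only [ne_eq, Prod.ext_iff, Fin.ext_iff] <;> omega

theorem faceSwap_faceSwap {n : ℕ} (p : Fin (n + 3) × Fin (n + 2)) :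
    faceSwap n (faceSwap n p) = p := by
  obtain ⟨i, i'⟩ := p
  rcases lt_or_ge (i' : ℕ) i with h | h
  · rw [faceSwap_of_lt h, faceSwap_of_le (by dsimp only; omega)]
    simp only [Prod.ext_iff, Fin.ext_iff, and_true]
    omega
  · rw [faceSwap_of_le h, faceSwap_of_lt (by dsimp only; omega)]
    simp

theorem dK_dK (j : ℕ) (a : K X j) : dK X (j + 1) (dK X j a) = 0 := by
  funext t
  rw [dK_dK_apply_eq_sum]
  refine Finset.sum_ninvolution (faceSwap j) (fun ⟨i, i'⟩ => ?_) (fun p _ => faceSwap_ne p)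
    (fun _ => Finset.mem_univ _) faceSwap_faceSwap
  rcases lt_or_ge (i' : ℕ) i with h | h
  · rw [faceSwap_of_lt h]
    refine K.zsmul_map_add_zsmul_map a (t.faceT_faceT (a := ⟨i', by omega⟩)
      (b := ⟨i - 1, by omega⟩) (by dsimp only; omega) (by dsimp only; omega) rfl).symm ?_ _ _
    rw [show (i : ℕ) + i' = i' + (i - 1) + 1 by omega, pow_succ]
    ring
  · rw [faceSwap_of_le h]
    refine K.zsmul_map_add_zsmul_map a (t.faceT_faceT h rfl rfl) ?_ _ _
    rw [show (i' : ℕ) + 1 + i = i + i' + 1 by omega, pow_succ]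
    ring

end Coboundary

namespace Tup

variable {ε : Ordinal} {m : ℕ}

theorem faceT_apply_last_lt (t : Tup ε (m + 2)) (i : Fin (m + 2)) {a : Set.Iio ε}
    (h : t.1 (Fin.last (m + 1)) < a) : (faceT t i).1 (Fin.last m) < a :=
  (t.2.monotone (Fin.le_last _)).trans_lt h

def snoc (s : Tup ε (m + 1)) (a : Set.Iio ε) (h : s.1 (Fin.last m) < a) : Tup ε (m + 2) :=
  ⟨Fin.snoc (α := fun _ => Set.Iio ε) s.1 a, by
    refine Fin.strictMono_iff_lt_succ.2 (Fin.lastCases ?_ fun i => ?_)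
    · simpa only [Fin.succ_last, Fin.snoc_last, Fin.snoc_castSucc] using h
    · simpa only [Fin.succ_castSucc, Fin.snoc_castSucc] using s.2 (Fin.castSucc_lt_succ (i := i))⟩

theorem snoc_apply_zero (s : Tup ε (m + 1)) (a : Set.Iio ε) (h : s.1 (Fin.last m) < a) :
    (s.snoc a h).1 0 = s.1 0 := by
  simp [snoc]

theorem faceT_snoc_last (s : Tup ε (m + 1)) (a : Set.Iio ε) (h : s.1 (Fin.last m) < a) :
    faceT (s.snoc a h) (Fin.last (m + 1)) = s := by
  refine Subtype.ext (funext fun x => ?_)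
  simp [faceT, snoc]

theorem faceT_snoc_castSucc (s : Tup ε (m + 2)) (a : Set.Iio ε) (h : s.1 (Fin.last (m + 1)) < a)
    (i : Fin (m + 2)) (h' : (faceT s i).1 (Fin.last m) < a) :
    faceT (s.snoc a h) i.castSucc = (faceT s i).snoc a h' := by
  refine Subtype.ext (funext (Fin.lastCases ?_ fun x => ?_))
  · simp [faceT, snoc]
  · simp [faceT, snoc]

theorem snoc_faceT_last (t : Tup ε (m + 2))
    (h : (faceT t (Fin.last (m + 1))).1 (Fin.last m) < t.1 (Fin.last (m + 1))) :
    (faceT t (Fin.last (m + 1))).snoc (t.1 (Fin.last (m + 1))) h = t := by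
  refine Subtype.ext ?_
  simp only [faceT, snoc, Fin.succAbove_last]
  exact Fin.snoc_init_self (α := fun _ => Set.Iio ε) t.1

end Tup

section Cone

variable {ε : Ordinal} {X : InvSys ε} {m : ℕ}

/-- The contracting homotopy towards a greatest index `top`. -/
def coneK (top : Set.Iio ε) (c : K X (m + 1)) : K X m := fun s =>
  if h : s.1 (Fin.last m) < top then
    (-1 : ℤ) ^ (m + 1) • X.map (s.snoc_apply_zero top h).ge (c (s.snoc top h))
  else 0

theorem coneK_of_lt {top : Set.Iio ε} (c : K X (m + 1)) {s : Tup ε (m + 1)}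
    (h : s.1 (Fin.last m) < top) :
    coneK top c s = (-1 : ℤ) ^ (m + 1) • X.map (s.snoc_apply_zero top h).ge (c (s.snoc top h)) :=
  dif_pos h

theorem coneK_of_not_lt {top : Set.Iio ε} (c : K X (m + 1)) {s : Tup ε (m + 1)}
    (h : ¬ s.1 (Fin.last m) < top) : coneK top c s = 0 :=
  dif_neg h

theorem dK_coneK_apply_of_lt {top : Set.Iio ε} {c : K X (m + 1)} (hc : dK X (m + 1) c = 0)
    {t : Tup ε (m + 2)} (ht : t.1 (Fin.last (m + 1)) < top) : dK X m (coneK top c) t = c t := by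
  have h0 : t.1 0 ≤ (t.snoc top ht).1 0 := (t.snoc_apply_zero top ht).ge
  have hcocycle := congrArg (X.map h0) (congrFun hc (t.snoc top ht))
  erw [map_dK_apply, map_zero, Fin.sum_univ_castSucc] at hcocycle
  have hlast : X.map (h0.trans ((t.snoc top ht).2.monotone
      (Fin.zero_le ((Fin.last (m + 2)).succAbove 0))))
      (c (faceT (t.snoc top ht) (Fin.last (m + 2)))) = c t :=
    (K.map_apply_congr c (t.faceT_snoc_last top ht) _ le_rfl).trans (X.map_self_apply _ _)
  have hterm : ∀ i : Fin (m + 2), (-1 : ℤ) ^ (i : ℕ) •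
      X.map (t.2.monotone (Fin.zero_le (i.succAbove 0))) (coneK top c (faceT t i)) =
      (-1 : ℤ) ^ (m + 1) • ((-1 : ℤ) ^ (i.castSucc : ℕ) •
        X.map (h0.trans ((t.snoc top ht).2.monotone (Fin.zero_le (i.castSucc.succAbove 0))))
          (c (faceT (t.snoc top ht) i.castSucc))) := by
    intro i
    erw [coneK_of_lt c (t.faceT_apply_last_lt i ht), map_zsmul, X.map_comp, smul_smul, smul_smul,
      mul_comm, Fin.val_castSucc,
      K.map_apply_congr c (t.faceT_snoc_castSucc top ht i (t.faceT_apply_last_lt i ht)).symm]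
    rfl
  rw [dK_apply, Finset.sum_congr rfl fun i _ => hterm i, ← Finset.smul_sum,
    eq_neg_of_add_eq_zero_left hcocycle, hlast, smul_neg, smul_smul, ← pow_add, Fin.val_last,
    show m + 1 + (m + 2) = 2 * (m + 1) + 1 by ring, pow_succ, pow_mul]
  simp

theorem dK_coneK_apply_of_eq {top : Set.Iio ε} (c : K X (m + 1)) {t : Tup ε (m + 2)}
    (ht : t.1 (Fin.last (m + 1)) = top) : dK X m (coneK top c) t = c t := by
  subst ht
  have hlt : (faceT t (Fin.last (m + 1))).1 (Fin.last m) < t.1 (Fin.last (m + 1)) :=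
    t.2 (by simp [Fin.lt_def])
  have hvanish : ∀ i : Fin (m + 1), coneK (t.1 (Fin.last (m + 1))) c (faceT t i.castSucc) = 0 :=
    fun i => coneK_of_not_lt c (by simp [faceT])
  rw [dK_apply, Fin.sum_univ_castSucc]
  erw [Finset.sum_eq_zero fun i _ => by erw [hvanish i, map_zero, smul_zero], zero_add,
    coneK_of_lt c hlt, map_zsmul, X.map_comp, smul_smul, ← pow_add, Fin.val_last,
    Even.neg_one_pow ⟨m + 1, rfl⟩, one_smul,
    K.map_apply_congr c (t.snoc_faceT_last hlt) _ le_rfl, X.map_self_apply]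

end Cone

theorem limVanishes_of_isTop {ε : Ordinal} {top : Set.Iio ε} (htop : IsTop top) (X : InvSys ε)
    (m : ℕ) : limVanishes X (m + 1) := fun c hc => by
  refine ⟨coneK top c, funext fun t => ?_⟩
  rcases (htop (t.1 (Fin.last (m + 1)))).lt_or_eq with ht | ht
  · exact dK_coneK_apply_of_lt hc ht
  · exact dK_coneK_apply_of_eq c ht

section Restriction

variable {ε δ : Ordinal}

def InvSys.restrict (X : InvSys ε) (hδ : δ ≤ ε) : InvSys δ where
  G α := X.G ⟨α, α.2.trans_le hδ⟩
  map h := X.map h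
  map_id _ := X.map_id _
  map_comp h₁ h₂ := X.map_comp h₁ h₂

namespace Tup

variable {m : ℕ}

def IsBelow (δ : Ordinal) (t : Tup ε m) : Prop := ∀ i, ((t.1 i : Set.Iio ε) : Ordinal) < δ

def castLE (hδ : δ ≤ ε) (t : Tup δ m) : Tup ε m :=
  ⟨fun i => ⟨t.1 i, (t.1 i).2.trans_le hδ⟩, fun _ _ h => t.2 h⟩

def restrict (t : Tup ε m) (h : t.IsBelow δ) : Tup δ m :=
  ⟨fun i => ⟨t.1 i, h i⟩, fun _ _ h => t.2 h⟩

theorem isBelow_castLE (hδ : δ ≤ ε) (t : Tup δ m) : (t.castLE hδ).IsBelow δ := fun i => (t.1 i).2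

theorem IsBelow.mono {δ' : Ordinal} {t : Tup ε m} (h : t.IsBelow δ) (hδ : δ ≤ δ') :
    t.IsBelow δ' :=
  fun i => (h i).trans_le hδ

theorem IsBelow.faceT {t : Tup ε (m + 1)} (h : t.IsBelow δ) (i : Fin (m + 1)) :
    (faceT t i).IsBelow δ :=
  fun _ => h _

theorem isBelow_of_last_lt {t : Tup ε (m + 1)}
    (h : ((t.1 (Fin.last m) : Set.Iio ε) : Ordinal) < δ) : t.IsBelow δ :=
  fun i => (show ((t.1 i : Set.Iio ε) : Ordinal) ≤ t.1 (Fin.last m) from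
    t.2.monotone (Fin.le_last i)).trans_lt h

end Tup

namespace K

variable {X : InvSys ε} {j : ℕ}

def restrict (hδ : δ ≤ ε) (z : K X j) : K (X.restrict hδ) j := fun t => z (t.castLE hδ)

open Classical in
def extend (hδ : δ ≤ ε) (a : K (X.restrict hδ) j) : K X j := fun t =>
  if h : t.IsBelow δ then a (t.restrict h) else 0

theorem sub_apply (f g : K X j) (t : Tup ε (j + 1)) : (f - g) t = f t - g t :=
  rfl

theorem restrict_extend (hδ : δ ≤ ε) (a : K (X.restrict hδ) j) :
    (a.extend hδ).restrict hδ = a :=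
  funext fun t => dif_pos (t.isBelow_castLE hδ)

def EqBelow (δ : Ordinal) (f g : K X j) : Prop := ∀ t : Tup ε (j + 1), t.IsBelow δ → f t = g t

theorem eqBelow_iff_restrict_eq (hδ : δ ≤ ε) {f g : K X j} :
    EqBelow δ f g ↔ f.restrict hδ = g.restrict hδ :=
  ⟨fun h => funext fun t => h _ (t.isBelow_castLE hδ),
    fun h t ht => congrFun h (t.restrict ht)⟩

theorem EqBelow.mono {δ' : Ordinal} {f g : K X j} (h : EqBelow δ' f g) (hδ : δ ≤ δ') :
    EqBelow δ f g :=
  fun t ht => h t (ht.mono hδ)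

theorem EqBelow.trans {f g h : K X j} (hfg : EqBelow δ f g) (hgh : EqBelow δ g h) :
    EqBelow δ f h :=
  fun t ht => (hfg t ht).trans (hgh t ht)

theorem EqBelow.dK {f g : K X j} (h : EqBelow δ f g) : EqBelow δ (dK X j f) (dK X j g) :=
  fun t ht => Finset.sum_congr rfl fun i _ => by rw [h _ (ht.faceT i)]

end K

theorem dK_restrict {X : InvSys ε} (hδ : δ ≤ ε) (j : ℕ) (z : K X j) :
    dK (X.restrict hδ) j (z.restrict hδ) = (dK X j z).restrict hδ :=
  rfl

theorem exists_dK_eqBelow {X : InvSys ε} (hδ : δ ≤ ε) {j : ℕ}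
    (hX : limVanishes (X.restrict hδ) (j + 1)) {z : K X (j + 1)}
    (hz : K.EqBelow δ (dK X (j + 1) z) 0) : ∃ a : K X j, K.EqBelow δ (dK X j a) z := by
  obtain ⟨a, ha⟩ := hX (z.restrict hδ) (by
    rw [dK_restrict, (K.eqBelow_iff_restrict_eq hδ).1 hz]; rfl)
  refine ⟨a.extend hδ, (K.eqBelow_iff_restrict_eq hδ).2 ?_⟩
  rw [← dK_restrict, K.restrict_extend, ha]

end Restriction

theorem limVanishes_zero (X : InvSys 0) (m : ℕ) : limVanishes X (m + 1) :=
  fun _ _ => ⟨0, funext fun t => absurd (Set.mem_Iio.1 (t.1 0).2) zero_le.not_gt⟩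

theorem limVanishes_of_not_isSuccLimit {ε : Ordinal} (hε : ¬ IsSuccLimit ε) (X : InvSys ε)
    (m : ℕ) : limVanishes X (m + 1) := by
  rcases Ordinal.zero_or_succ_or_isSuccLimit ε with rfl | ⟨δ, rfl⟩ | h
  · exact limVanishes_zero X m
  · exact limVanishes_of_isTop (top := ⟨δ, lt_succ δ⟩)
      (fun a => Subtype.mk_le_mk.2 (le_of_lt_succ a.2)) X m
  · exact absurd h hε

structure IsContinuousCofinal (ε θ : Ordinal) (F : Ordinal → Ordinal) : Prop where
  le : ∀ ξ < θ, F ξ ≤ ε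
  mono : Monotone F
  lt_of_isSuccLimit : ∀ ξ < θ, IsSuccLimit ξ → ∀ α < F ξ, ∃ η < ξ, α < F η
  cofinal : ∀ α < ε, ∃ ξ < θ, α < F ξ

section Glue

variable {ε : Ordinal} {X : InvSys ε} {m : ℕ} {c : K X (m + 2)}

open K

theorem exists_eqBelow_of_coherent {j : ℕ} {F : Ordinal → Ordinal} {ξ : Ordinal}
    {B : Ordinal → K X j} (hB : ∀ η ζ, η < ζ → ζ < ξ → EqBelow (F η) (B ζ) (B η)) :
    ∃ b : K X j, ∀ η < ξ, EqBelow (F η) b (B η) := by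
  classical
  refine ⟨fun t => if h : ∃ η < ξ, t.IsBelow (F η) then B h.choose t else 0, fun η hη t ht => ?_⟩
  have h : ∃ η < ξ, t.IsBelow (F η) := ⟨η, hη, ht⟩
  obtain ⟨hη₁, ht₁⟩ := h.choose_spec
  refine (dif_pos h).trans ?_
  rcases lt_trichotomy h.choose η with hlt | heq | hgt
  · exact (hB _ _ hlt hη t ht₁).symm
  · rw [heq]
  · exact hB _ _ hgt hη₁ t ht

theorem exists_dK_eqBelow_of_coherent {F : Ordinal → Ordinal} {ξ δ : Ordinal}
    {B : Ordinal → K X (m + 1)} (hB : ∀ η ζ, η < ζ → ζ < ξ → EqBelow (F η) (B ζ) (B η))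
    (hBc : ∀ η < ξ, EqBelow (F η) (dK X (m + 1) (B η)) c)
    (hcover : ∀ α < δ, ∃ η < ξ, α < F η) :
    ∃ b, EqBelow δ (dK X (m + 1) b) c ∧ ∀ η < ξ, EqBelow (F η) b (B η) := by
  obtain ⟨b, hb⟩ := exists_eqBelow_of_coherent hB
  refine ⟨b, fun t ht => ?_, hb⟩
  obtain ⟨η, hη, hlt⟩ := hcover _ (ht (Fin.last (m + 2)))
  have htη : t.IsBelow (F η) := Tup.isBelow_of_last_lt hlt
  exact ((hb η hη).dK t htη).trans (hBc η hη t htη)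

theorem exists_dK_eqBelow_extending {δ δ' : Ordinal} (hδ : δ ≤ δ') (hδ' : δ' ≤ ε)
    (hX : limVanishes (X.restrict (hδ.trans hδ')) (m + 1))
    (hX' : limVanishes (X.restrict hδ') (m + 2)) (hc : dK X (m + 2) c = 0) {b : K X (m + 1)}
    (hb : EqBelow δ (dK X (m + 1) b) c) :
    ∃ b', EqBelow δ' (dK X (m + 1) b') c ∧ EqBelow δ b' b := by
  obtain ⟨b₁, hb₁⟩ := exists_dK_eqBelow hδ' hX' fun t _ => congrFun hc t
  have hcocycle : EqBelow δ (dK X (m + 1) (b₁ - b)) 0 := fun t ht => by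
    rw [dK_sub, sub_apply, hb₁ t (ht.mono hδ), hb t ht, sub_self]
    rfl
  obtain ⟨a, ha⟩ := exists_dK_eqBelow (hδ.trans hδ') hX hcocycle
  refine ⟨b₁ - dK X m a, fun t ht => ?_, fun t ht => ?_⟩
  · rw [dK_sub, dK_dK, sub_zero, hb₁ t ht]
  · rw [sub_apply, ha t ht, sub_apply, sub_sub_cancel]

theorem exists_next_stage {θ : Ordinal} {F : Ordinal → Ordinal} (hF : IsContinuousCofinal ε θ F)
    (hseg : ∀ ξ (hξ : ξ < θ) n, m < n → limVanishes (X.restrict (hF.le ξ hξ)) n)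
    (hc : dK X (m + 2) c = 0) {ξ : Ordinal} (hξ : ξ < θ) {B : Ordinal → K X (m + 1)}
    (hB : ∀ η < ξ, EqBelow (F η) (dK X (m + 1) (B η)) c ∧
      ∀ ζ < η, EqBelow (F ζ) (B η) (B ζ)) :
    ∃ b, EqBelow (F ξ) (dK X (m + 1) b) c ∧ ∀ η < ξ, EqBelow (F η) b (B η) := by
  rcases Ordinal.zero_or_succ_or_isSuccLimit ξ with rfl | ⟨η₀, rfl⟩ | hlim
  · obtain ⟨b, hb⟩ := exists_dK_eqBelow (hF.le 0 hξ) (hseg 0 hξ _ (by omega)) fun t _ =>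
      congrFun hc t
    exact ⟨b, hb, fun η hη => absurd hη zero_le.not_gt⟩
  · have hη₀ : η₀ < θ := (lt_succ η₀).trans hξ
    obtain ⟨b, hb, hbη₀⟩ := exists_dK_eqBelow_extending (hF.mono (le_succ η₀)) (hF.le _ hξ)
      (hseg η₀ hη₀ _ (lt_add_one m)) (hseg _ hξ _ (by omega)) hc (hB η₀ (lt_succ η₀)).1
    refine ⟨b, hb, fun η hη => ?_⟩
    rcases (le_of_lt_succ hη).lt_or_eq with hlt | rfl
    · exact (hbη₀.mono (hF.mono hlt.le)).trans ((hB η₀ (lt_succ η₀)).2 η hlt)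
    · exact hbη₀
  · exact exists_dK_eqBelow_of_coherent (fun η ζ hηζ hζ => (hB ζ hζ).2 η hηζ)
      (fun η hη => (hB η hη).1) (hF.lt_of_isSuccLimit ξ hξ hlim)

theorem exists_coherent_stages {θ : Ordinal} {F : Ordinal → Ordinal}
    (hF : IsContinuousCofinal ε θ F)
    (hseg : ∀ ξ (hξ : ξ < θ) n, m < n → limVanishes (X.restrict (hF.le ξ hξ)) n)
    (hc : dK X (m + 2) c = 0) :
    ∃ B : Ordinal → K X (m + 1), ∀ ξ < θ, EqBelow (F ξ) (dK X (m + 1) (B ξ)) c ∧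
      ∀ η < ξ, EqBelow (F η) (B ξ) (B η) := by
  let B : Ordinal → K X (m + 1) := wellFounded_lt.fix fun ξ IH => Classical.epsilon fun b =>
    EqBelow (F ξ) (dK X (m + 1) b) c ∧ ∀ η (hη : η < ξ), EqBelow (F η) b (IH η hη)
  have hB : ∀ ξ, B ξ = Classical.epsilon fun b =>
      EqBelow (F ξ) (dK X (m + 1) b) c ∧ ∀ η < ξ, EqBelow (F η) b (B η) :=
    fun ξ => WellFounded.fix_eq _ _ _
  refine ⟨B, fun ξ => ?_⟩
  induction ξ using WellFoundedLT.induction with | _ ξ IH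
  intro hξ
  rw [hB ξ]
  exact Classical.epsilon_spec (exists_next_stage hF hseg hc hξ fun η hη => IH η hη (hη.trans hξ))

theorem limVanishes_of_isContinuousCofinal {θ : Ordinal} {F : Ordinal → Ordinal}
    (hF : IsContinuousCofinal ε θ F)
    (hseg : ∀ ξ (hξ : ξ < θ) n, m < n → limVanishes (X.restrict (hF.le ξ hξ)) n) :
    limVanishes X (m + 2) := fun c hc => by
  obtain ⟨B, hB⟩ := exists_coherent_stages hF hseg hc
  obtain ⟨b, hb, -⟩ := exists_dK_eqBelow_of_coherent (fun η ζ hηζ hζ => (hB ζ hζ).2 η hηζ)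
    (fun η hη => (hB η hη).1) hF.cofinal
  exact ⟨b, funext fun t => hb t fun i => (t.1 i).2⟩

end Glue

theorem exists_cofinal_strictMonoOn (ε : Ordinal) :
    ∃ g : Ordinal → Ordinal, StrictMonoOn g (Set.Iio ε.cof.ord) ∧
      (∀ η < ε.cof.ord, g η < ε) ∧ ∀ α < ε, ∃ η < ε.cof.ord, α ≤ g η := by
  obtain ⟨f, hf⟩ := Ordinal.exists_isFundamentalSeq (o := ε) rfl
  refine ⟨fun η => if h : η < ε.cof.ord then f ⟨η, h⟩ else 0, fun a ha b hb hab => ?_,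
    fun η hη => ?_, fun α hα => ?_⟩
  · simp only [Set.mem_Iio.1 ha, Set.mem_Iio.1 hb, ↓reduceDIte]
    exact hf.strictMono (show (⟨a, ha⟩ : Set.Iio _) < ⟨b, hb⟩ from hab)
  · simp only [hη, ↓reduceDIte]
    exact (f _).2
  · obtain ⟨_, ⟨i, rfl⟩, hi⟩ := hf.isCofinal_range ⟨α, hα⟩
    exact ⟨i, i.2, by simp only [Set.mem_Iio.1 i.2, ↓reduceDIte]; exact hi⟩

/-- Take `F ξ = sup_{η < ξ} (g η + 1)` for a strictly increasing cofinal `g`; then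
`cof (F ξ) = cof ξ ≤ |ξ| < cof ε`. -/
theorem exists_isContinuousCofinal {ε : Ordinal} (hε : IsSuccLimit ε) :
    ∃ F, IsContinuousCofinal ε ε.cof.ord F ∧ ∀ ξ < ε.cof.ord, (F ξ).cof < ε.cof := by
  obtain ⟨g, hmono, hlt, hcofinal⟩ := exists_cofinal_strictMonoOn ε
  have hθ : IsSuccLimit ε.cof.ord :=
    Cardinal.isSuccLimit_ord (Ordinal.aleph0_le_cof_iff.2 (Ordinal.one_lt_cof_iff.2 hε))
  let F : Ordinal → Ordinal := fun ξ => ⨆ η : Set.Iio ξ, g η + 1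
  have le_F : ∀ {η ξ}, η < ξ → g η + 1 ≤ F ξ := fun {η ξ} h =>
    Ordinal.le_iSup (fun η : Set.Iio ξ => g η + 1) ⟨η, h⟩
  have lt_F : ∀ {α ξ}, α < F ξ → ∃ η < ξ, α ≤ g η := fun h => by
    simpa using Ordinal.lt_iSup_add_one_iff.1 h
  refine ⟨F, ⟨fun ξ hξ => ?_, fun ξ ξ' h => ?_, fun ξ _ hlim α hα => ?_, fun α hα => ?_⟩,
    fun ξ hξ => ?_⟩
  · exact Ordinal.iSup_le fun η => Order.add_one_le_of_lt (hlt η (η.2.trans hξ))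
  · exact Ordinal.iSup_le fun η => le_F (η.2.trans_le h)
  · obtain ⟨η, hη, hαη⟩ := lt_F hα
    exact ⟨η + 1, hlim.add_one_lt hη, (Order.lt_add_one_iff.2 hαη).trans_le (le_F (lt_add_one η))⟩
  · obtain ⟨η, hη, hαη⟩ := hcofinal α hα
    exact ⟨η + 1, hθ.add_one_lt hη, (Order.lt_add_one_iff.2 hαη).trans_le (le_F (lt_add_one η))⟩
  · rw [Ordinal.cof_iSup_Iio_add_one fun a b hab => hmono (a.2.trans hξ) (b.2.trans hξ) hab]
    exact (Ordinal.cof_le_card ξ).trans_lt (Cardinal.lt_ord.1 hξ)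

theorem limVanishes_of_cof_lt_aleph :
    ∀ (k : ℕ) {ε : Ordinal.{0}}, ε.cof < ℵ_ k → ∀ (X : InvSys ε) {n : ℕ}, k < n → limVanishes X n
  | k, ε, hε, X, n, hn => by
    by_cases hlim : IsSuccLimit ε
    swap
    · obtain ⟨m, rfl⟩ : ∃ m, n = m + 1 := ⟨n - 1, by omega⟩
      exact limVanishes_of_not_isSuccLimit hlim X m
    cases k with
    | zero =>
      refine absurd (Ordinal.aleph0_le_cof_iff.2 (Ordinal.one_lt_cof_iff.2 hlim)) ?_
      simpa using hε
    | succ k =>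
      obtain ⟨F, hF, hFcof⟩ := exists_isContinuousCofinal hlim
      obtain ⟨m, rfl⟩ : ∃ m, n = m + 2 := ⟨n - 2, by omega⟩
      have hε' : ε.cof ≤ ℵ_ k := by
        rwa [Nat.cast_succ, ← succ_aleph, lt_succ_iff] at hε
      exact limVanishes_of_isContinuousCofinal hF fun ξ hξ _ hj =>
        limVanishes_of_cof_lt_aleph k ((hFcof ξ hξ).trans_le hε') _ (by omega)

/-- (Goblot) If `ε` has cofinality `ℵ_k` (`k` a natural number), then the cohomological
dimension of `ε` is at most `k + 1`: `lim^n X = 0` for every inverse system `X` of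
abelian groups over `ε` and every `n > k + 1`. -/
theorem stmt5 (ε : Ordinal) (k : ℕ) (hcof : ε.cof = Cardinal.aleph k) :
    ∀ (X : InvSys ε) (n : ℕ), k + 1 < n → limVanishes X n := fun X _ hn =>
  limVanishes_of_cof_lt_aleph (k + 1) (by rw [hcof]; exact aleph_lt_aleph.2 (by simp)) X hn
end
end

section
/- ω₁, the least uncountable ordinal, is the least ordinal admitting no good graph: every countable ordinal admits a good graph, and there is no good graph on ω₁. -/
/-!
In a good graph on a linear order without a greatest element, every vertex `v` has exactly one
neighbour above it: one exists because the tail `[v, →)` is connected, and two of them, `a` and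
`b`, would be joined inside the tail above `min a b`, which avoids `v`, closing a cycle. So the
graph is the graph of a strictly increasing map `u`, and connectedness says that any two
`u`-orbits meet. On `ω₁` the orbit of `0` is bounded by a countable ordinal `s`, and the orbit of
`s` lies above the whole orbit of `0`, so the two never meet.

Conversely, on a countable linear order enumerated by `e`, join every `x` to the `e`-least element
above it. The least vertex of a cycle would have two neighbours above it, so the graph is acyclic.
The orbit of `x` eventually passes any `y`; at the step where it jumps over `y` it lands on the
`e`-least element above `y`, so the orbits of `x` and `y` meet, which connects every tail.
-/

noncomputable section

/-- A graph on an ordinal `γ` (i.e., a simple graph whose vertices are the ordinals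
below `γ`) is *good* if it contains no cycles and, for every `α < γ`, its induced
subgraph on the tail `[α, γ)` is connected. -/
def GoodGraph (γ : Ordinal) (G : SimpleGraph ↥(Set.Iio γ)) : Prop :=
  G.IsAcyclic ∧
    ∀ α : ↥(Set.Iio γ), (G.induce {β : ↥(Set.Iio γ) | α.1 ≤ β.1}).Connected

open Function Set

namespace SimpleGraph

variable {V : Type*} {f : V → V}

def ofFun (f : V → V) : SimpleGraph V := fromRel fun x y => f x = y

theorem ofFun_adj {x y : V} : (ofFun f).Adj x y ↔ x ≠ y ∧ (f x = y ∨ f y = x) :=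
  fromRel_adj ..

theorem ofFun_reachable_iterate (x : V) (k : ℕ) : (ofFun f).Reachable x (f^[k] x) := by
  induction k with
  | zero => rfl
  | succ k ih =>
    refine ih.trans ?_
    rw [iterate_succ_apply']
    by_cases h : f^[k] x = f (f^[k] x)
    · rw [← h]
    · exact (ofFun_adj.2 ⟨h, Or.inl rfl⟩).reachable

theorem ofFun_reachable_iff {x y : V} :
    (ofFun f).Reachable x y ↔ ∃ m n, f^[m] x = f^[n] y := by
  constructor
  · rintro ⟨p⟩
    induction p with
    | nil => exact ⟨0, 0, rfl⟩
    | cons hadj _ ih =>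
      obtain ⟨m, n, hmn⟩ := ih
      rcases (ofFun_adj.1 hadj).2 with rfl | rfl
      · exact ⟨m + 1, n, by rwa [iterate_succ_apply]⟩
      · refine ⟨m, n + 1, ?_⟩
        rw [← iterate_succ_apply, iterate_succ_apply', hmn, iterate_succ_apply']
  · rintro ⟨m, n, h⟩
    exact (ofFun_reachable_iterate x m).trans (h ▸ (ofFun_reachable_iterate y n).symm)

theorem induce_ofFun {s : Set V} (hs : MapsTo f s s) :
    (ofFun f).induce s = ofFun (hs.restrict f s s) := by
  ext x y
  simp [ofFun_adj, Subtype.ext_iff]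

theorem ofFun_adj_of_lt [Preorder V] (hf : ∀ x, x ≤ f x) {x y : V} (h : (ofFun f).Adj x y)
    (hxy : x < y) : f x = y :=
  (ofFun_adj.1 h).2.resolve_right fun hyx => (hyx ▸ hf y).not_gt hxy

section LinearOrder

variable [LinearOrder V] {G : SimpleGraph V}

theorem isAcyclic_ofFun (hf : ∀ x, x ≤ f x) : (ofFun f).IsAcyclic := by
  intro v c hc
  obtain ⟨m, hm, hmin⟩ := c.support.toFinset.exists_min_image id ⟨v, by simp⟩
  rw [List.mem_toFinset] at hm
  set d := c.rotate m hm
  have hd : d.IsCycle := hc.rotate hm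
  have hup : ∀ w, (ofFun f).Adj m w → w ∈ d.support → f m = w := fun w hw hwd =>
    ofFun_adj_of_lt hf hw <| (hmin w (by simpa [d] using hwd)).lt_of_ne hw.ne
  exact hd.snd_ne_penultimate <|
    (hup _ (d.adj_snd hd.not_nil) (d.getVert_mem_support 1)).symm.trans
      (hup _ (d.adj_penultimate hd.not_nil).symm (d.getVert_mem_support _))

theorem exists_adj_gt_of_induce_Ici_connected [NoMaxOrder V]
    (hG : ∀ a, (G.induce (Ici a)).Connected) (v : V) : ∃ w, G.Adj v w ∧ v < w := by
  obtain ⟨w, hvw⟩ := exists_gt v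
  obtain ⟨p⟩ := (hG v).preconnected ⟨v, self_mem_Ici⟩ ⟨w, mem_Ici.2 hvw.le⟩
  have hadj : G.Adj v p.snd := p.adj_snd <| Walk.not_nil_of_ne <| by
    simpa [Subtype.ext_iff] using hvw.ne
  exact ⟨p.snd, hadj, p.snd.2.lt_of_ne hadj.ne⟩

theorem eq_of_adj_of_adj_of_lt_of_lt (hac : G.IsAcyclic)
    (hG : ∀ a, (G.induce (Ici a)).Connected) {v a b : V} (ha : G.Adj v a) (hb : G.Adj v b)
    (hva : v < a) (hvb : v < b) : a = b := by
  by_contra hab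
  -- without the edge `va`, `v` still reaches `a` via `b` and the tail above `min a b`
  refine isBridge_iff.1 (isAcyclic_iff_forall_adj_isBridge.1 hac ha) ?_
  have hb' : (G.deleteEdges {s(v, a)}).Adj v b :=
    (deleteEdges_adj ..).2 ⟨hb, by simpa [Sym2.eq_iff, hva.ne] using Ne.symm hab⟩
  have hφ : ∀ x y : Ici (min a b), G.Adj x y → (G.deleteEdges {s(v, a)}).Adj x y := by
    intro x y hxy
    have hv : ∀ z : Ici (min a b), z.1 ≠ v := fun z => ((lt_min hva hvb).trans_le z.2).ne'
    refine (deleteEdges_adj ..).2 ⟨hxy, fun h => ?_⟩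
    rw [mem_singleton_iff, Sym2.eq_iff] at h
    rcases h with ⟨hx, -⟩ | ⟨-, hy⟩
    exacts [hv x hx, hv y hy]
  exact hb'.reachable.trans <| ((hG (min a b)).preconnected ⟨b, mem_Ici.2 (min_le_right a b)⟩
    ⟨a, mem_Ici.2 (min_le_left a b)⟩).map ⟨Subtype.val, hφ _ _⟩

theorem exists_eq_ofFun_of_isAcyclic [NoMaxOrder V] (hac : G.IsAcyclic)
    (hG : ∀ a, (G.induce (Ici a)).Connected) :
    ∃ u : V → V, (∀ x, x < u x) ∧ G = ofFun u := by
  choose u hadj hlt using exists_adj_gt_of_induce_Ici_connected hG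
  refine ⟨u, hlt, ?_⟩
  ext x y
  rw [ofFun_adj]
  constructor
  · intro h
    refine ⟨h.ne, ?_⟩
    rcases h.ne.lt_or_gt with hxy | hyx
    · exact Or.inl (eq_of_adj_of_adj_of_lt_of_lt hac hG (hadj x) h (hlt x) hxy)
    · exact Or.inr (eq_of_adj_of_adj_of_lt_of_lt hac hG (hadj y) h.symm (hlt y) hyx)
  · rintro ⟨-, rfl | rfl⟩
    exacts [hadj x, (hadj y).symm]

theorem not_isAcyclic_and_induce_Ici_connected [NoMaxOrder V] [Nonempty V]
    (hbdd : ∀ s : ℕ → V, BddAbove (range s)) :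
    ¬ (G.IsAcyclic ∧ ∀ a, (G.induce (Ici a)).Connected) := by
  rintro ⟨hac, hG⟩
  obtain ⟨u, hu, rfl⟩ := exists_eq_ofFun_of_isAcyclic hac hG
  obtain ⟨x⟩ := ‹Nonempty V›
  obtain ⟨s, hs⟩ := hbdd fun k => u^[k] x
  have hxs : (ofFun u).Reachable x s :=
    ((hG x).preconnected ⟨x, self_mem_Ici⟩ ⟨s, mem_Ici.2 (hs ⟨0, rfl⟩)⟩).map
      (Embedding.induce _).toHom
  obtain ⟨m, n, hmn⟩ := ofFun_reachable_iff.1 hxs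
  refine lt_irrefl (u^[m] x) ?_
  calc u^[m] x < u^[m + 1] x := by rw [iterate_succ_apply']; exact hu _
    _ ≤ s := hs ⟨m + 1, rfl⟩
    _ ≤ u^[n] s := id_le_iterate_of_id_le (fun y => (hu y).le) n s
    _ = u^[m] x := hmn.symm

end LinearOrder

end SimpleGraph

section LeastAbove

variable {V : Type*} [LinearOrder V] (e : V ↪ ℕ)

open scoped Classical in
def leastAbove (x : V) : V :=
  if h : (Ioi x).Nonempty then argminOn e (Ioi x) h else x

variable {e}

theorem lt_leastAbove {x y : V} (hxy : x < y) : x < leastAbove e x := by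
  rw [leastAbove, dif_pos ⟨y, hxy⟩]
  exact argminOn_mem e _ _

theorem le_leastAbove (x : V) : x ≤ leastAbove e x := by
  by_cases h : (Ioi x).Nonempty
  · exact (lt_leastAbove h.some_mem).le
  · rw [leastAbove, dif_neg h]

theorem leastAbove_le {x y : V} (hxy : x < y) : e (leastAbove e x) ≤ e y := by
  rw [leastAbove, dif_pos ⟨y, hxy⟩]
  exact argminOn_le e _ hxy

theorem leastAbove_eq_of_lt_of_lt {x y : V} (hxy : x < y) (hy : y < leastAbove e x) :
    leastAbove e y = leastAbove e x :=
  e.injective <| (leastAbove_le hy).antisymm <| leastAbove_le <| hxy.trans (lt_leastAbove hy)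

theorem exists_le_iterate_leastAbove (x z : V) : ∃ k, z ≤ (leastAbove e)^[k] x := by
  -- otherwise the orbit would be an infinite set of elements of `e`-rank at most `e z`
  by_contra! h
  have hmono : StrictMono fun k => (leastAbove e)^[k] x :=
    strictMono_nat_of_lt_succ fun k => by
      rw [iterate_succ_apply']
      exact lt_leastAbove (h k)
  have hfin : {w | e w ≤ e z}.Finite := (finite_Iic (e z)).preimage e.injective.injOn
  refine (infinite_of_injective_forall_mem (hmono.injective.comp (add_left_injective 1))
    fun k => ?_) hfin
  show e ((leastAbove e)^[k + 1] x) ≤ e z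
  rw [iterate_succ_apply']
  exact leastAbove_le (h k)

theorem exists_iterate_leastAbove_eq (x y : V) :
    ∃ m n, (leastAbove e)^[m] x = (leastAbove e)^[n] y := by
  wlog hxy : x ≤ y generalizing x y
  · obtain ⟨m, n, h⟩ := this y x (le_of_not_ge hxy)
    exact ⟨n, m, h.symm⟩
  have hex := exists_le_iterate_leastAbove (e := e) x y
  have hy : y ≤ (leastAbove e)^[Nat.find hex] x := Nat.find_spec hex
  cases hk : Nat.find hex with
  | zero => exact ⟨0, 0, hxy.antisymm (by simpa [hk] using hy)⟩
  | succ j =>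
    have hjy : (leastAbove e)^[j] x < y := not_le.1 <| Nat.find_min hex (hk ▸ j.lt_succ_self)
    rw [hk, iterate_succ_apply'] at hy
    rcases hy.eq_or_lt with rfl | hlt
    · exact ⟨j + 1, 0, iterate_succ_apply' ..⟩
    · refine ⟨j + 1, 1, ?_⟩
      rw [iterate_succ_apply', iterate_one, leastAbove_eq_of_lt_of_lt hjy hlt]

end LeastAbove

theorem exists_isAcyclic_induce_Ici_connected {V : Type*} [LinearOrder V] [Countable V] :
    ∃ G : SimpleGraph V, G.IsAcyclic ∧ ∀ a, (G.induce (Ici a)).Connected := by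
  obtain ⟨e⟩ := nonempty_embedding_nat V
  refine ⟨.ofFun (leastAbove e), SimpleGraph.isAcyclic_ofFun le_leastAbove, fun a => ?_⟩
  have hmaps : MapsTo (leastAbove e) (Ici a) (Ici a) := fun x hx => le_trans hx (le_leastAbove x)
  rw [SimpleGraph.induce_ofFun hmaps]
  have : Nonempty (Ici a) := ⟨⟨a, self_mem_Ici⟩⟩
  refine ⟨fun x y => SimpleGraph.ofFun_reachable_iff.2 ?_⟩
  obtain ⟨m, n, h⟩ := exists_iterate_leastAbove_eq (e := e) x y
  exact ⟨m, n, Subtype.ext (by simpa [MapsTo.coe_iterate_restrict] using h)⟩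

namespace Ordinal

open Cardinal

theorem countable_Iio_of_lt_omega_one {γ : Ordinal} (hγ : γ < ω₁) : Countable (Iio γ) := by
  rwa [← mk_le_aleph0_iff, Cardinal.mk_Iio_ordinal, lift_le_aleph0, ← lt_aleph_one_iff,
    ← lt_ord, ord_aleph]

theorem bddAbove_range_Iio_omega_one (s : ℕ → Iio ω₁) : BddAbove (range s) :=
  ⟨⟨⨆ n, (s n).1, iSup_lt_omega_one fun n => (s n).2⟩, by
    rintro _ ⟨n, rfl⟩
    exact Ordinal.le_iSup (fun n => (s n).1) n⟩

end Ordinal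

/-- `ω₁` is the least ordinal admitting no good graph: every countable ordinal admits
a good graph, while `ω₁` admits none. -/
theorem stmt12 :
    (∀ γ : Ordinal, γ < (Cardinal.aleph 1).ord →
      ∃ G : SimpleGraph ↥(Set.Iio γ), GoodGraph γ G) ∧
    ¬ ∃ G : SimpleGraph ↥(Set.Iio ((Cardinal.aleph 1).ord)),
        GoodGraph ((Cardinal.aleph 1).ord) G := by
  refine ⟨fun γ hγ => ?_, ?_⟩
  · rw [Cardinal.ord_aleph] at hγ
    have := Ordinal.countable_Iio_of_lt_omega_one hγ
    exact exists_isAcyclic_induce_Ici_connected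
  · rw [Cardinal.ord_aleph]
    rintro ⟨G, hG⟩
    have := (Cardinal.isSuccLimit_omega 1).isSuccPrelimit.noMaxOrder_Iio
    have : Nonempty (Iio (Ordinal.omega 1)) := ⟨⟨0, Ordinal.omega_pos 1⟩⟩
    exact SimpleGraph.not_isAcyclic_and_induce_Ici_connected
      Ordinal.bddAbove_range_Iio_omega_one hG
end
end

section
/- Let γ be an ordinal and let G be a connected graph on γ. Then G is good if and only if G contains no 'forbidden configuration': there are no ordinals α < β < δ < γ such that both {α,β} and {α,δ} are edges of G. -/
noncomputable section

/-!
Nothing about ordinals is needed: the argument works for a graph on any linear order.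
If no vertex has two larger neighbours, the smallest vertex of a path is one of its ends
(an interior minimum would have two larger neighbours on the path). Hence a path stays in
the tail above its smaller end, which makes tails connected, and the first edge of a path
from `u` to a larger `v` must be `uv`, which makes every edge a bridge. Conversely, in a
good graph a fork `a < b < c` with `a ~ b`, `a ~ c` yields a walk `a ~ b ⤳ c` inside
`{a} ∪ [b, ∞)` avoiding the edge `ac`, so `ac` is not a bridge.
-/

namespace SimpleGraph

variable {V : Type*} [LinearOrder V] {G : SimpleGraph V}

def HasNoUpFork (G : SimpleGraph V) : Prop :=
  ∀ ⦃a b c : V⦄, a < b → b < c → G.Adj a b → G.Adj a c → False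

namespace HasNoUpFork

theorem eq_of_adj_of_adj (hG : G.HasNoUpFork) {a b c : V} (hab : a < b) (hac : a < c)
    (h₁ : G.Adj a b) (h₂ : G.Adj a c) : b = c := by
  rcases lt_trichotomy b c with hbc | rfl | hcb
  · exact (hG hab hbc h₁ h₂).elim
  · rfl
  · exact (hG hac hcb h₂ h₁).elim

theorem min_le_of_mem_support (hG : G.HasNoUpFork) {u v : V} {p : G.Walk u v}
    (hp : p.IsPath) {x : V} (hx : x ∈ p.support) : min u v ≤ x := by
  induction p generalizing x with
  | nil => simp_all
  | @cons u w v huw q ih =>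
    rw [Walk.cons_isPath_iff] at hp
    rw [Walk.support_cons, List.mem_cons] at hx
    rcases hx with rfl | hx
    · exact min_le_left _ _
    -- If `w < u`, the path cannot climb again after `w`: a second larger neighbour of `w` is a fork.
    have hw : u ≤ w ∨ v ≤ w := by
      by_contra! h
      obtain ⟨hwu, hwv⟩ := h
      cases q with
      | nil => exact hwv.false
      | @cons _ z _ hwz r =>
        have hz : z ∈ (Walk.cons hwz r).support := by simp
        have hwz' : w < z := (min_eq_left hwv.le ▸ ih hp.1 hz).lt_of_ne hwz.ne
        exact hp.2 (hG.eq_of_adj_of_adj hwu hwz' huw.symm hwz ▸ hz)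
    calc min u v ≤ min w v := by rcases hw with hw | hw <;> simp [hw]
      _ ≤ x := ih hp.1 hx

theorem mem_edges_of_isPath (hG : G.HasNoUpFork) {u v : V} (huv : u < v) (h : G.Adj u v) :
    ∀ p : G.Walk u v, p.IsPath → s(u, v) ∈ p.edges
  | .nil, _ => (huv.ne rfl).elim
  | .cons (v := x) hux q, hp => by
    have hux' : min u v ≤ x := hG.min_le_of_mem_support hp (by simp)
    have hx : u < x := (min_eq_left huv.le ▸ hux').lt_of_ne hux.ne
    obtain rfl := hG.eq_of_adj_of_adj hx huv hux h
    simp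

theorem isBridge (hG : G.HasNoUpFork) {u v : V} (h : G.Adj u v) : G.IsBridge s(u, v) := by
  wlog huv : u < v generalizing u v
  · rw [Sym2.eq_swap]
    exact this h.symm ((not_lt.1 huv).lt_of_ne h.ne.symm)
  rw [isBridge_iff_forall_walk_mem_edges]
  exact fun p ↦ p.edges_bypass_subset_edges (hG.mem_edges_of_isPath huv h _ p.bypass_isPath)

theorem isAcyclic (hG : G.HasNoUpFork) : G.IsAcyclic :=
  isAcyclic_iff_forall_adj_isBridge.2 fun _ _ ↦ hG.isBridge

theorem reachable_induce_Ici_min (hG : G.HasNoUpFork) {u v : V} (h : G.Reachable u v) :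
    (G.induce (Set.Ici (min u v))).Reachable ⟨u, min_le_left u v⟩ ⟨v, min_le_right u v⟩ := by
  obtain ⟨p⟩ := h
  exact ⟨p.bypass.induce _ fun x hx ↦ hG.min_le_of_mem_support p.bypass_isPath hx⟩

theorem connected_induce_Ici (hG : G.HasNoUpFork) (hconn : G.Connected) (a : V) :
    (G.induce (Set.Ici a)).Connected := by
  have : Nonempty (Set.Ici a) := ⟨⟨a, Set.mem_Ici.2 le_rfl⟩⟩
  refine Connected.mk fun ⟨u, hu⟩ ⟨v, hv⟩ ↦ ?_
  exact (hG.reachable_induce_Ici_min (hconn u v)).map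
    (G.induceHomOfLE (Set.Ici_subset_Ici.2 (le_min hu hv))).toHom

end HasNoUpFork

theorem hasNoUpFork_of_isAcyclic (hacyc : G.IsAcyclic)
    (htail : ∀ a, (G.induce (Set.Ici a)).Preconnected) : G.HasNoUpFork := by
  intro a b c hab hbc hab' hac'
  obtain ⟨q⟩ := htail b ⟨b, Set.mem_Ici.2 le_rfl⟩ ⟨c, Set.mem_Ici.2 hbc.le⟩
  let p := q.map (Embedding.induce (Set.Ici b)).toHom
  have ha : a ∉ p.support := by
    rw [Walk.support_map, List.mem_map]
    rintro ⟨⟨x, hx⟩, -, rfl⟩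
    exact hab.not_ge hx
  have hac := isBridge_iff_forall_walk_mem_edges.1
    (isAcyclic_iff_forall_adj_isBridge.1 hacyc hac') (.cons hab' p)
  rcases List.mem_cons.1 hac with hac | hac
  · exact hbc.ne' (Sym2.congr_right.1 hac)
  · exact ha (p.fst_mem_support_of_mem_edges hac)

theorem isAcyclic_and_connected_induce_Ici_iff (hconn : G.Connected) :
    (G.IsAcyclic ∧ ∀ a, (G.induce (Set.Ici a)).Connected) ↔ G.HasNoUpFork :=
  ⟨fun h ↦ hasNoUpFork_of_isAcyclic h.1 fun a ↦ (h.2 a).preconnected,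
    fun h ↦ ⟨h.isAcyclic, h.connected_induce_Ici hconn⟩⟩

end SimpleGraph

/-- A connected graph on an ordinal `γ` is good if and only if it contains no
forbidden configuration: no ordinals `α < β < δ < γ` with both `{α, β}` and
`{α, δ}` edges. -/
theorem stmt14 (γ : Ordinal) (G : SimpleGraph ↥(Set.Iio γ)) (hG : G.Connected) :
    GoodGraph γ G ↔
      ¬ ∃ a b c : ↥(Set.Iio γ), a.1 < b.1 ∧ b.1 < c.1 ∧ G.Adj a b ∧ G.Adj a c := by
  refine (G.isAcyclic_and_connected_induce_Ici_iff hG).trans ?_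
  simp only [SimpleGraph.HasNoUpFork, not_exists, not_and, imp_false]
  rfl
end
end

section
/- There exists a nontrivial 1-coherent family of height ω₁ valued in ℤ/2ℤ: a family (φ_β)_{β<ω₁} of functions φ_β : {ξ : ξ < β} → ℤ/2ℤ such that φ_δ|_β − φ_β is nonzero at only finitely many points for all β ≤ δ < ω₁, while no single function ψ : {ξ : ξ < ω₁} → ℤ/2ℤ satisfies that ψ|_β − φ_β is nonzero at only finitely many points for every β < ω₁. (In particular, the first Čech cohomology group of ω₁ with coefficients in the constant sheaf ℤ/2ℤ is nonzero.) -/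
/-!
For every nonzero countable `δ` fix a sequence cofinal in `δ` (its ladder). Walking from `δ` down
towards `ξ < δ`, always stepping to the first ladder point `≥ ξ`, and recording the largest index
used gives `ρ δ : δ → ℕ` (Todorcevic's walks on ordinals). By induction on `δ`, each `ρ δ` is
finite-to-one and `ρ δ`, `ρ β` differ at only finitely many points below `β ≤ δ`.

Coding `ρ δ` in `ℤ/2ℤ` column by column (`φ δ (ω * η + n) = 1` iff `n = ρ δ η`) gives a coherent
family. A trivialization `ψ` would decode to `g : ω₁ → ℕ` with `g =* ρ α` below every `α < ω₁`.
Some fibre `g⁻¹ {k}` is uncountable, hence has infinitely many points below some countable `α`,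
while `ρ α` takes each value only finitely often.
-/

noncomputable section

open Ordinal Set

namespace OmegaOneCoherence

/-- Cofinality is taken with `≤` so that successor ordinals also have such sequences: every
nonzero countable ordinal does (any enumeration of it). -/
def IsCofinalSeq (δ : Ordinal) (f : ℕ → Ordinal) : Prop :=
  (∀ n, f n < δ) ∧ ∀ ξ < δ, ∃ n, ξ ≤ f n

open scoped Classical in
def ladder (δ : Ordinal) : ℕ → Ordinal :=
  if h : ∃ f, IsCofinalSeq δ f then h.choose else fun _ => 0

open scoped Classical in
def ladderIndex (δ ξ : Ordinal) : ℕ :=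
  if h : ∃ n, ξ ≤ ladder δ n then Nat.find h else 0

/-- The guard only serves termination: it holds whenever `δ` has a cofinal sequence. -/
def rho (δ ξ : Ordinal) : ℕ :=
  if ladder δ (ladderIndex δ ξ) < δ then
    max (rho (ladder δ (ladderIndex δ ξ)) ξ) (ladderIndex δ ξ)
  else 0
termination_by δ

theorem isCofinalSeq_ladder {δ : Ordinal} (hδ : (Iio δ).Countable) (h0 : δ ≠ 0) :
    IsCofinalSeq δ (ladder δ) := by
  obtain ⟨f, hf⟩ := hδ.exists_eq_range ⟨0, pos_iff_ne_zero.2 h0⟩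
  have hex : ∃ f, IsCofinalSeq δ f := by
    refine ⟨f, fun n => ?_, fun ξ hξ => ?_⟩
    · exact (hf.symm ▸ mem_range_self n : f n ∈ Iio δ)
    · obtain ⟨n, hn⟩ := (hf ▸ hξ : ξ ∈ range f)
      exact ⟨n, hn.ge⟩
  rw [ladder, dif_pos hex]
  exact hex.choose_spec

theorem le_ladder_ladderIndex {δ ξ : Ordinal} (hL : IsCofinalSeq δ (ladder δ)) (hξ : ξ < δ) :
    ξ ≤ ladder δ (ladderIndex δ ξ) := by
  have h := hL.2 ξ hξ
  rw [ladderIndex, dif_pos h]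
  exact Nat.find_spec h

theorem ladderIndex_le {δ ξ : Ordinal} {n : ℕ} (h : ξ ≤ ladder δ n) : ladderIndex δ ξ ≤ n := by
  rw [ladderIndex, dif_pos ⟨n, h⟩]
  exact Nat.find_min' _ h

theorem rho_eq_max {δ : Ordinal} (hL : IsCofinalSeq δ (ladder δ)) (ξ : Ordinal) :
    rho δ ξ = max (rho (ladder δ (ladderIndex δ ξ)) ξ) (ladderIndex δ ξ) := by
  rw [rho, if_pos (hL.1 _)]

theorem finite_rho_le {δ : Ordinal} (hδ : (Iio δ).Countable) (k : ℕ) :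
    {ξ | ξ < δ ∧ rho δ ξ ≤ k}.Finite := by
  induction δ using WellFoundedLT.induction with
  | _ δ IH =>
  rcases eq_or_ne δ 0 with rfl | h0
  · simp
  have hL := isCofinalSeq_ladder hδ h0
  refine ((finite_le_nat k).biUnion fun n _ =>
    ((IH _ (hL.1 n) (hδ.mono (Iio_subset_Iio (hL.1 n).le))).insert (ladder δ n))).subset ?_
  rintro ξ ⟨hξ, hk⟩
  rw [rho_eq_max hL, max_le_iff] at hk
  refine mem_biUnion hk.2 ?_
  rcases (le_ladder_ladderIndex hL hξ).eq_or_lt with h | h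
  · exact Or.inl h
  · exact Or.inr ⟨h, hk.1⟩

theorem finite_rho_ne {β δ : Ordinal} (hδ : (Iio δ).Countable) (hβδ : β ≤ δ) :
    {ξ | ξ < β ∧ rho δ ξ ≠ rho β ξ}.Finite := by
  induction δ using WellFoundedLT.induction generalizing β with
  | _ δ IH =>
  rcases hβδ.eq_or_lt with rfl | hβδ
  · simp
  have hL := isCofinalSeq_ladder hδ (pos_iff_ne_zero.1 (hβδ.trans_le' (zero_le (a := β))))
  obtain ⟨m, hm⟩ := hL.2 β hβδ
  have hcount : ∀ γ < δ, (Iio γ).Countable := fun γ hγ => hδ.mono (Iio_subset_Iio hγ.le)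
  have hstep : ∀ n, {ξ | ξ < β ∧ ξ < ladder δ n ∧ rho (ladder δ n) ξ ≠ rho β ξ}.Finite := by
    intro n
    rcases le_total (ladder δ n) β with h | h
    · exact (IH β hβδ (hcount β hβδ) h).subset fun ξ hξ => ⟨hξ.2.1, hξ.2.2.symm⟩
    · exact (IH _ (hL.1 n) (hcount _ (hL.1 n)) h).subset fun ξ hξ => ⟨hξ.1, hξ.2.2⟩
  refine ((finite_le_nat m).biUnion fun n _ =>
    (((hstep n).insert (ladder δ n)).union (finite_rho_le (hcount β hβδ) n))).subset ?_
  -- If the first step `γ` of the walk to `ξ` has `rho γ ξ = rho β ξ`, the disagreement comes from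
  -- the index of that step exceeding `rho β ξ`, which happens for finitely many `ξ` only.
  rintro ξ ⟨hξ, hne⟩
  have hi : ladderIndex δ ξ ≤ m := ladderIndex_le (hξ.le.trans hm)
  rw [rho_eq_max hL] at hne
  refine mem_biUnion hi ?_
  by_cases heq : rho (ladder δ (ladderIndex δ ξ)) ξ = rho β ξ
  · rw [heq] at hne
    exact Or.inr ⟨hξ, (lt_of_not_ge fun h => hne (max_eq_left h)).le⟩
  · rcases (le_ladder_ladderIndex hL (hξ.trans hβδ)).eq_or_lt with h | h
    · exact Or.inl (Or.inl h)
    · exact Or.inl (Or.inr ⟨hξ, h, heq⟩)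

theorem countable_Iio_iff_lt_omega_one {δ : Ordinal} : (Iio δ).Countable ↔ δ < ω₁ := by
  rw [← Cardinal.le_aleph0_iff_set_countable, Cardinal.mk_Iio_ordinal, Cardinal.lift_le_aleph0,
    ← Cardinal.lt_aleph_one_iff, Cardinal.lt_omega_iff_card_lt]

theorem exists_lt_omega_one_infinite_inter_Iio {S : Set Ordinal} (hS : ¬ S.Countable)
    (hSω₁ : S ⊆ Iio ω₁) : ∃ α < ω₁, (S ∩ Iio α).Infinite := by
  have f : ℕ ↪ S := (show S.Infinite from fun h => hS h.countable).natEmbedding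
  set α := ⨆ n, Order.succ (f n : Ordinal)
  refine ⟨α, iSup_lt_omega_one fun n => ?_, ?_⟩
  · exact (Cardinal.isSuccLimit_omega 1).succ_lt (hSω₁ (f n).2)
  refine (infinite_range_of_injective (Subtype.val_injective.comp f.injective)).mono ?_
  rintro _ ⟨n, rfl⟩
  have hle : Order.succ (f n : Ordinal) ≤ α :=
    Ordinal.le_iSup (fun n => Order.succ (f n : Ordinal)) n
  exact ⟨(f n).2, mem_Iio.2 ((Order.lt_succ _).trans_le hle)⟩

theorem exists_not_countable_fiber (g : Ordinal → ℕ) :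
    ∃ k, ¬ {η | η < ω₁ ∧ g η = k}.Countable := by
  by_contra! h
  have hcover : Iio ω₁ ⊆ ⋃ k, {η | η < ω₁ ∧ g η = k} := fun η hη =>
    mem_iUnion_of_mem (g η) ⟨hη, rfl⟩
  have : (Iio ω₁).Countable := (countable_iUnion h).mono hcover
  exact (countable_Iio_iff_lt_omega_one.1 this).false

theorem not_forall_finite_ne_of_finite_fibers {e : Ordinal → Ordinal → ℕ}
    (he : ∀ α < ω₁, ∀ k, {η | η < α ∧ e α η ≤ k}.Finite) (g : Ordinal → ℕ) :
    ¬ ∀ α < ω₁, {η | η < α ∧ g η ≠ e α η}.Finite := by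
  intro hg
  obtain ⟨k, hk⟩ := exists_not_countable_fiber g
  obtain ⟨α, hα, hinf⟩ := exists_lt_omega_one_infinite_inter_Iio hk fun η hη => hη.1
  refine hinf (((hg α hα).union (he α hα k)).subset ?_)
  rintro η ⟨⟨-, rfl⟩, hηα⟩
  by_cases h : g η = e α η
  · exact Or.inr ⟨hηα, h.ge⟩
  · exact Or.inl ⟨hηα, h⟩

section Coding

variable {A : Type*} [Zero A] [One A]

variable (A) in
def columnCode (e : Ordinal → ℕ) (ξ : Ordinal) : A :=
  if ξ % ω = e (ξ / ω) then 1 else 0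

open scoped Classical in
def decode (Ψ : Ordinal → A) (η : Ordinal) : ℕ :=
  if h : ∃ n : ℕ, Ψ (ω * η + n) = 1 then Nat.find h else 0

theorem omega0_mul_add_natCast_div (η : Ordinal) (n : ℕ) : (ω * η + n) / ω = η := by
  rw [mul_add_div _ omega0_ne_zero, div_eq_zero_of_lt (natCast_lt_omega0 n), add_zero]

theorem omega0_mul_add_natCast_mod (η : Ordinal) (n : ℕ) : (ω * η + n) % ω = n := by
  rw [mul_add_mod_self, mod_eq_of_lt (natCast_lt_omega0 n)]

theorem columnCode_omega0_mul_add_natCast (e : Ordinal → ℕ) (η : Ordinal) (n : ℕ) :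
    columnCode A e (ω * η + n) = if n = e η then 1 else 0 := by
  simp only [columnCode, omega0_mul_add_natCast_div, omega0_mul_add_natCast_mod, Nat.cast_inj]

theorem finite_columnCode_ne {e e' : Ordinal → ℕ} {β : Ordinal}
    (h : {η | η < β ∧ e η ≠ e' η}.Finite) :
    {ξ | ξ < β ∧ columnCode A e ξ ≠ columnCode A e' ξ}.Finite := by
  refine (h.biUnion fun η _ => (toFinite {ω * η + e η, ω * η + e' η})).subset ?_
  rintro ξ ⟨hξ, hne⟩
  have hdecomp : ω * (ξ / ω) + ξ % ω = ξ := div_add_mod ξ ω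
  have hcol : ξ % ω = e (ξ / ω) ∨ ξ % ω = e' (ξ / ω) := by
    by_contra! h
    exact hne (by rw [columnCode, columnCode, if_neg h.1, if_neg h.2])
  refine mem_biUnion ⟨(div_le_of_le_mul (le_mul_right ξ omega0_pos)).trans_lt hξ, fun heq => ?_⟩ ?_
  · exact hne (by rw [columnCode, columnCode, heq])
  · rcases hcol with h | h
    · exact Or.inl (by rw [← h, hdecomp])
    · exact Or.inr (mem_singleton_iff.2 (by rw [← h, hdecomp]))

theorem decode_eq_of_forall_eq_columnCode [NeZero (1 : A)] {Ψ : Ordinal → A} {e : Ordinal → ℕ}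
    {η : Ordinal} (h : ∀ n : ℕ, Ψ (ω * η + n) = columnCode A e (ω * η + n)) :
    decode Ψ η = e η := by
  classical
  have hΨ : ∀ n : ℕ, Ψ (ω * η + n) = 1 ↔ n = e η := fun n => by
    rw [h, columnCode_omega0_mul_add_natCast]
    split_ifs with hn <;> simp [hn]
  have hex : ∃ n : ℕ, Ψ (ω * η + n) = 1 := ⟨e η, (hΨ _).2 rfl⟩
  rw [decode, dif_pos hex, Nat.find_eq_iff]
  exact ⟨(hΨ _).2 rfl, fun n hn h1 => hn.ne ((hΨ n).1 h1)⟩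

theorem finite_decode_ne [NeZero (1 : A)] {Ψ : Ordinal → A} {e : Ordinal → ℕ} {α : Ordinal}
    (h : {ξ | ξ < ω * α ∧ Ψ ξ ≠ columnCode A e ξ}.Finite) :
    {η | η < α ∧ decode Ψ η ≠ e η}.Finite := by
  refine (h.image (· / ω)).subset ?_
  rintro η ⟨hη, hne⟩
  obtain ⟨n, hn⟩ : ∃ n : ℕ, Ψ (ω * η + n) ≠ columnCode A e (ω * η + n) := by
    by_contra! hcol
    exact hne (decode_eq_of_forall_eq_columnCode hcol)
  have hlt : ω * η + n < ω * α := by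
    rwa [lt_mul_iff_div_lt omega0_ne_zero, omega0_mul_add_natCast_div]
  exact ⟨ω * η + n, ⟨hlt, hn⟩, omega0_mul_add_natCast_div η n⟩

end Coding

theorem finite_columnCode_rho_ne {A : Type*} [Zero A] [One A] {β δ : Ordinal} (hδ : δ < ω₁)
    (hβδ : β ≤ δ) :
    {ξ | ξ < β ∧ columnCode A (rho δ) ξ ≠ columnCode A (rho β) ξ}.Finite :=
  finite_columnCode_ne (finite_rho_ne (countable_Iio_iff_lt_omega_one.2 hδ) hβδ)

theorem not_exists_finite_ne_columnCode_rho (A : Type*) [Zero A] [One A] [NeZero (1 : A)] :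
    ¬ ∃ Ψ : Ordinal → A, ∀ δ < ω₁, {ξ | ξ < δ ∧ Ψ ξ ≠ columnCode A (rho δ) ξ}.Finite := by
  rintro ⟨Ψ, hΨ⟩
  refine not_forall_finite_ne_of_finite_fibers
    (fun α hα k => finite_rho_le (countable_Iio_iff_lt_omega_one.2 hα) k) (decode Ψ) ?_
  intro α hα
  have hωα : ω * α < ω₁ := Ordinal.isPrincipal_mul_omega 1 omega0_lt_omega_one hα
  refine ((finite_decode_ne (hΨ _ hωα)).union
    (finite_rho_ne (countable_Iio_iff_lt_omega_one.2 hωα) (le_mul_right α omega0_pos))).subset ?_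
  rintro η ⟨hη, hne⟩
  by_cases h : decode Ψ η = rho (ω * α) η
  · exact Or.inr ⟨hη, h ▸ hne⟩
  · exact Or.inl ⟨hη, h⟩

end OmegaOneCoherence

open OmegaOneCoherence in
/-- There exists a nontrivial `1`-coherent family of height `ω₁` valued in `ℤ/2ℤ`:
a family `(φ_β)_{β<ω₁}` of functions `φ_β : {ξ : ξ < β} → ℤ/2ℤ` that is coherent
(any two members agree at all but finitely many points of their common domain)
but is trivialized by no single function `ψ : {ξ : ξ < ω₁} → ℤ/2ℤ`. -/
theorem stmt19 :
    ∃ φ : (β : Set.Iio ((Cardinal.aleph 1).ord)) → Set.Iio β.1 → ZMod 2,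
      (∀ (β δ : Set.Iio ((Cardinal.aleph 1).ord)) (h : β.1 ≤ δ.1),
        {ξ : Set.Iio β.1 | φ δ ⟨ξ.1, lt_of_lt_of_le ξ.2 h⟩ - φ β ξ ≠ 0}.Finite) ∧
      ¬ ∃ ψ : Set.Iio ((Cardinal.aleph 1).ord) → ZMod 2,
          ∀ β : Set.Iio ((Cardinal.aleph 1).ord),
            {ξ : Set.Iio β.1 | ψ ⟨ξ.1, Set.mem_Iio.mpr ((Set.mem_Iio.mp ξ.2).trans (Set.mem_Iio.mp β.2))⟩ - φ β ξ ≠ 0}.Finite := by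
  have hω₁ : (Cardinal.aleph 1).ord = ω₁ := Cardinal.ord_aleph 1
  refine ⟨fun β ξ => columnCode (ZMod 2) (rho β) ξ, fun β δ hβδ => ?_, ?_⟩
  · have := finite_columnCode_rho_ne (A := ZMod 2) (hω₁ ▸ δ.2) hβδ
    exact (this.preimage Subtype.val_injective.injOn).subset fun ξ hξ => ⟨ξ.2, sub_ne_zero.1 hξ⟩
  · rintro ⟨ψ, hψ⟩
    refine not_exists_finite_ne_columnCode_rho (ZMod 2)
      ⟨fun ξ => if h : ξ < (Cardinal.aleph 1).ord then ψ ⟨ξ, h⟩ else 0, fun δ hδ => ?_⟩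
    refine ((hψ ⟨δ, hω₁ ▸ hδ⟩).image Subtype.val).subset ?_
    rintro ξ ⟨hξ, hne⟩
    refine ⟨⟨ξ, hξ⟩, sub_ne_zero.2 ?_, rfl⟩
    dsimp only at hne ⊢
    rwa [dif_pos (hξ.trans (hω₁ ▸ hδ))] at hne
end
end
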